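/- arXiv:2503.16626 — 6 statements merged into one kernel-verified Lean document; each statement's English description precedes it below -/
import Mathlib

section
/- Let X and Y be compact Hausdorff spaces and φ : X → Y a continuous surjection. Then for every f ∈ C(X) there exists g ∈ C(Y) such that ‖f − g ∘ φ‖∞ = dist(f, {h ∘ φ : h ∈ C(Y)}) = (1/2)·sup_{y ∈ Y} osc_{φ⁻¹(y)} f, where the distance is taken in the supremum norm of C(X). -/
open Set Topology

/-- The oscillation of a real-valued function on a set: `sup {f a - f b : a, b ∈ A}`. -/
noncomputable def osc {X : Type*} (f : X → ℝ) (A : Set X) : ℝ :=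
  sSup ((fun p : X × X => f p.1 - f p.2) '' (A ×ˢ A))

section aux

variable {X Y : Type} [TopologicalSpace X] [CompactSpace X] [T2Space X]
    [TopologicalSpace Y] [CompactSpace Y] [T2Space Y]

lemma osc_bddAbove (f : C(X, ℝ)) (A : Set X) :
    BddAbove ((fun p : X × X => f p.1 - f p.2) '' (A ×ˢ A)) := by
  refine ⟨2 * ‖f‖, ?_⟩
  rintro _ ⟨⟨a, b⟩, _, rfl⟩
  have ha := abs_le.mp (f.norm_coe_le_norm a)
  have hb := abs_le.mp (f.norm_coe_le_norm b)
  dsimp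
  linarith [ha.1, ha.2, hb.1, hb.2]

lemma sub_le_osc (f : C(X, ℝ)) {A : Set X} {a b : X} (ha : a ∈ A) (hb : b ∈ A) :
    f a - f b ≤ osc (⇑f) A :=
  le_csSup (osc_bddAbove f A) ⟨(a, b), ⟨ha, hb⟩, rfl⟩

lemma osc_nonneg (f : C(X, ℝ)) {A : Set X} (hA : A.Nonempty) : 0 ≤ osc (⇑f) A := by
  obtain ⟨a, ha⟩ := hA
  have := sub_le_osc f ha ha
  linarith

lemma osc_le_two_norm (f : C(X, ℝ)) (A : Set X) : osc (⇑f) A ≤ 2 * ‖f‖ := by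
  refine Real.sSup_le ?_ (by positivity)
  rintro _ ⟨⟨a, b⟩, _, rfl⟩
  have ha := abs_le.mp (f.norm_coe_le_norm a)
  have hb := abs_le.mp (f.norm_coe_le_norm b)
  dsimp
  linarith [ha.1, ha.2, hb.1, hb.2]

lemma bddAbove_osc (φ : X → Y) (f : C(X, ℝ)) :
    BddAbove (Set.range fun y : Y => osc (⇑f) (φ ⁻¹' {y})) := by
  refine ⟨2 * ‖f‖, ?_⟩
  rintro _ ⟨y, rfl⟩
  exact osc_le_two_norm f _

lemma d_nonneg (φ : X → Y) (hφs : Function.Surjective φ) (f : C(X, ℝ)) :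
    0 ≤ (1 / 2 : ℝ) * ⨆ y : Y, osc (⇑f) (φ ⁻¹' {y}) := by
  have : 0 ≤ ⨆ y : Y, osc (⇑f) (φ ⁻¹' {y}) := by
    refine Real.iSup_nonneg fun y => ?_
    obtain ⟨x, hx⟩ := hφs y
    exact osc_nonneg f ⟨x, hx⟩
  linarith

lemma osc_le_two_d (φ : X → Y) (f : C(X, ℝ)) (y : Y) :
    osc (⇑f) (φ ⁻¹' {y}) ≤ 2 * ((1 / 2 : ℝ) * ⨆ y : Y, osc (⇑f) (φ ⁻¹' {y})) := by
  have h := le_ciSup (bddAbove_osc φ f) y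
  linarith

/-- Lower bound: every `h ∘ φ` is at distance at least `d` from `f`. -/
lemma lower_bound (φ : X → Y) (hφc : Continuous φ) (f : C(X, ℝ)) (h : C(Y, ℝ)) :
    (1 / 2 : ℝ) * (⨆ y : Y, osc (⇑f) (φ ⁻¹' {y})) ≤ ‖f - h.comp ⟨φ, hφc⟩‖ := by
  have key : (⨆ y : Y, osc (⇑f) (φ ⁻¹' {y})) ≤ 2 * ‖f - h.comp ⟨φ, hφc⟩‖ := by
    refine Real.iSup_le (fun y => ?_) (by positivity)
    refine Real.sSup_le ?_ (by positivity)
    rintro _ ⟨⟨a, b⟩, ⟨(ha : φ a = y), (hb : φ b = y)⟩, rfl⟩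
    have Ha := abs_le.mp ((f - h.comp ⟨φ, hφc⟩).norm_coe_le_norm a)
    have Hb := abs_le.mp ((f - h.comp ⟨φ, hφc⟩).norm_coe_le_norm b)
    simp only [ContinuousMap.sub_apply, ContinuousMap.comp_apply, ContinuousMap.coe_mk] at Ha Hb
    rw [ha] at Ha; rw [hb] at Hb
    dsimp
    linarith [Ha.1, Ha.2, Hb.1, Hb.2]
  linarith

/-- One step of the approximation improvement. -/
lemma step (φ : X → Y) (hφc : Continuous φ) (f : C(X, ℝ)) {ε : ℝ} (hε : 0 < ε)
    (hd0 : 0 ≤ (1 / 2 : ℝ) * (⨆ y : Y, osc (⇑f) (φ ⁻¹' {y}))) (g : C(Y, ℝ))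
    (hg : ‖f - g.comp ⟨φ, hφc⟩‖ ≤ (1 / 2) * (⨆ y : Y, osc (⇑f) (φ ⁻¹' {y})) + ε) :
    ∃ g' : C(Y, ℝ),
      ‖f - g'.comp ⟨φ, hφc⟩‖ ≤ (1 / 2) * (⨆ y : Y, osc (⇑f) (φ ⁻¹' {y})) + (2 / 3) * ε ∧
      ‖g' - g‖ ≤ ε / 3 := by
  set d : ℝ := (1 / 2) * (⨆ y : Y, osc (⇑f) (φ ⁻¹' {y})) with hd
  set c : ℝ := d + ε / 3 with hc
  -- The two "bad" closed sets in Y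
  set A : Set Y := φ '' {x | c ≤ f x - g (φ x)} with hA
  set B : Set Y := φ '' {x | c ≤ g (φ x) - f x} with hB
  have hfc : Continuous fun x => f x - g (φ x) :=
    f.continuous.sub (g.continuous.comp hφc)
  have hAcl : IsClosed A := by
    refine (IsCompact.image ?_ hφc).isClosed
    exact (isClosed_le continuous_const hfc).isCompact
  have hBcl : IsClosed B := by
    refine (IsCompact.image ?_ hφc).isClosed
    exact (isClosed_le continuous_const (hfc.neg.congr fun x => by show -(f x - g (φ x)) = _; ring)).isCompact
  have hdisj : Disjoint A B := by
    rw [Set.disjoint_left]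
    rintro y ⟨x₁, hx₁, rfl⟩ ⟨x₂, hx₂, hx₂y⟩
    have h1 : f x₁ - f x₂ ≤ osc (⇑f) (φ ⁻¹' {φ x₁}) := by
      refine sub_le_osc f rfl ?_
      exact hx₂y
    have h2 := osc_le_two_d φ f (φ x₁)
    simp only [Set.mem_setOf_eq] at hx₁ hx₂
    rw [hx₂y] at hx₂
    have h3 : f x₁ - f x₂ ≤ 2 * d := by rw [hd]; linarith [h1.trans h2]
    rw [hc] at hx₁ hx₂
    linarith
  obtain ⟨u, hu0, hu1, huI⟩ := exists_continuous_zero_one_of_isClosed hBcl hAcl hdisj.symm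
  refine ⟨g + (ε / 3) • ((2 : ℝ) • u - 1), ?_, ?_⟩
  · rw [ContinuousMap.norm_le _ (by linarith)]
    · intro x
      set y := φ x with hy
      have hval : ((2:ℝ) • u - 1) y = 2 * u y - 1 := by
        simp [ContinuousMap.smul_apply, ContinuousMap.sub_apply]
      have huy := huI y
      have hub : |2 * u y - 1| ≤ 1 := by
        rw [abs_le]; constructor <;> [linarith [huy.1]; linarith [huy.2]]
      have hnorm := abs_le.mp ((f - g.comp ⟨φ, hφc⟩).norm_coe_le_norm x)
      simp only [ContinuousMap.sub_apply, ContinuousMap.comp_apply,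
        ContinuousMap.coe_mk] at hnorm ⊢
      have hgy : ((g + (ε / 3) • ((2 : ℝ) • u - 1)) : C(Y, ℝ)) y
          = g y + (ε / 3) * (2 * u y - 1) := by
        simp [ContinuousMap.add_apply, ContinuousMap.smul_apply, hval]
      rw [Real.norm_eq_abs, hgy, abs_le]
      have hub' := abs_le.mp hub
      constructor
      · -- lower bound: -(d + 2/3 ε) ≤ f x - (g y + χ)
        by_cases hxB : y ∈ B
        · have h0 : u y = 0 := hu0 hxB
          rw [h0]
          have : f x - g y ≥ -(d + ε) := by linarith [hnorm.1]
          linarith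
        · have hxB' : ¬ (c ≤ g (φ x) - f x) := fun hcon => hxB ⟨x, hcon, rfl⟩
          push_neg at hxB'
          rw [hc] at hxB'
          nlinarith [hub'.1, hub'.2, hε.le]
      · -- upper bound
        by_cases hxA : y ∈ A
        · have h1 : u y = 1 := hu1 hxA
          rw [h1]
          have : f x - g y ≤ d + ε := by linarith [hnorm.2]
          linarith
        · have hxA' : ¬ (c ≤ f x - g (φ x)) := fun hcon => hxA ⟨x, hcon, rfl⟩
          push_neg at hxA'
          rw [hc] at hxA'
          nlinarith [hub'.1, hub'.2, hε.le]
  · have : (g + (ε / 3) • ((2 : ℝ) • u - 1)) - g = (ε / 3) • ((2 : ℝ) • u - 1) := by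
      abel
    rw [this, ContinuousMap.norm_le _ (by positivity)]
    intro y
    have huy := huI y
    simp only [ContinuousMap.smul_apply, ContinuousMap.sub_apply, ContinuousMap.one_apply,
      smul_eq_mul]
    rw [Real.norm_eq_abs, abs_mul, abs_of_pos (by positivity : (0:ℝ) < ε / 3)]
    have : |2 * u y - 1| ≤ 1 := by
      rw [abs_le]; constructor <;> [linarith [huy.1]; linarith [huy.2]]
    nlinarith [hε.le]

end aux

/-- Let `X` and `Y` be compact Hausdorff spaces and `φ : X → Y` a continuous surjection.
Then for every `f ∈ C(X)` there exists `g ∈ C(Y)` such that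
`‖f − g ∘ φ‖ = dist(f, {h ∘ φ : h ∈ C(Y)}) = (1/2)·sup_{y ∈ Y} osc_{φ⁻¹(y)} f`. -/
theorem stmt0 {X Y : Type} [TopologicalSpace X] [CompactSpace X] [T2Space X]
    [TopologicalSpace Y] [CompactSpace Y] [T2Space Y]
    (φ : X → Y) (hφc : Continuous φ) (hφs : Function.Surjective φ) (f : C(X, ℝ)) :
    ∃ g : C(Y, ℝ),
      ‖f - g.comp ⟨φ, hφc⟩‖ =
        Metric.infDist f {h : C(X, ℝ) | ∃ g' : C(Y, ℝ), h = g'.comp ⟨φ, hφc⟩} ∧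
      ‖f - g.comp ⟨φ, hφc⟩‖ = (1 / 2) * ⨆ y : Y, osc (⇑f) (φ ⁻¹' {y}) := by
  set d : ℝ := (1 / 2) * ⨆ y : Y, osc (⇑f) (φ ⁻¹' {y}) with hd
  have hd0 : 0 ≤ d := d_nonneg φ hφs f
  let T := {p : C(Y, ℝ) × ℝ // 0 < p.2 ∧ ‖f - p.1.comp ⟨φ, hφc⟩‖ ≤ d + p.2}
  have key : ∀ t : T, ∃ t' : T,
      t'.1.2 = (2 / 3) * t.1.2 ∧ ‖t'.1.1 - t.1.1‖ ≤ t.1.2 / 3 := by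
    rintro ⟨⟨g, ε⟩, hε, hg⟩
    obtain ⟨g', h1, h2⟩ := step φ hφc f hε hd0 g hg
    exact ⟨⟨(g', (2 / 3) * ε), by positivity, h1⟩, rfl, h2⟩
  choose next hn1 hn2 using key
  have ht₀ : (0 : ℝ) < ‖f‖ + 1 ∧ ‖f - (0 : C(Y, ℝ)).comp ⟨φ, hφc⟩‖ ≤ d + (‖f‖ + 1) := by
    constructor
    · positivity
    · have : (0 : C(Y, ℝ)).comp ⟨φ, hφc⟩ = 0 := by ext x; simp
      rw [this, sub_zero]
      linarith
  set t₀ : T := ⟨((0 : C(Y, ℝ)), ‖f‖ + 1), ht₀⟩ with ht₀def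
  set G : ℕ → T := fun n => next^[n] t₀ with hG
  have hGs : ∀ n, G (n + 1) = next (G n) := fun n => Function.iterate_succ_apply' next n t₀
  have hεn : ∀ n, (G n).1.2 = (2 / 3) ^ n * (‖f‖ + 1) := by
    intro n
    induction n with
    | zero => simp [hG, ht₀def]
    | succ k ih => rw [hGs k, hn1, ih]; ring
  have hdist : ∀ n, dist ((G n).1.1) ((G (n + 1)).1.1) ≤ ((‖f‖ + 1) / 3) * (2 / 3) ^ n := by
    intro n
    rw [dist_comm, dist_eq_norm, hGs n]
    have := hn2 (G n)
    rw [hεn n] at this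
    calc ‖(next (G n)).1.1 - (G n).1.1‖ ≤ (2 / 3) ^ n * (‖f‖ + 1) / 3 := this
      _ = ((‖f‖ + 1) / 3) * (2 / 3) ^ n := by ring
  have hcauchy : CauchySeq (fun n => (G n).1.1) :=
    cauchySeq_of_le_geometric (2 / 3) ((‖f‖ + 1) / 3) (by norm_num) hdist
  obtain ⟨g, hgl⟩ := cauchySeq_tendsto_of_complete hcauchy
  have hlip : LipschitzWith 1 (fun h : C(Y, ℝ) => h.comp ⟨φ, hφc⟩) := by
    refine LipschitzWith.of_dist_le_mul fun a b => ?_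
    simp only [NNReal.coe_one, one_mul]
    refine (ContinuousMap.dist_le dist_nonneg).mpr fun x => ?_
    exact a.dist_apply_le_dist (g := b) (φ x)
  have hcomp : Filter.Tendsto (fun n => ((G n).1.1).comp ⟨φ, hφc⟩) Filter.atTop
      (nhds (g.comp ⟨φ, hφc⟩)) := (hlip.continuous.tendsto g).comp hgl
  have hnorm : Filter.Tendsto (fun n => ‖f - ((G n).1.1).comp ⟨φ, hφc⟩‖) Filter.atTop
      (nhds ‖f - g.comp ⟨φ, hφc⟩‖) :=
    ((continuous_norm.tendsto _).comp (tendsto_const_nhds.sub hcomp))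
  have hlim : Filter.Tendsto (fun n : ℕ => d + (2 / 3) ^ n * (‖f‖ + 1)) Filter.atTop
      (nhds d) := by
    have h1 : Filter.Tendsto (fun n : ℕ => (2 / 3 : ℝ) ^ n) Filter.atTop (nhds 0) :=
      tendsto_pow_atTop_nhds_zero_of_lt_one (by norm_num) (by norm_num)
    have h2 := (h1.mul_const (‖f‖ + 1)).const_add d
    simpa using h2
  have hub : ‖f - g.comp ⟨φ, hφc⟩‖ ≤ d := by
    refine le_of_tendsto_of_tendsto' hnorm hlim fun n => ?_
    have := (G n).2.2
    rw [hεn n] at this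
    exact this
  have hlb : d ≤ ‖f - g.comp ⟨φ, hφc⟩‖ := by rw [hd]; exact lower_bound φ hφc f g
  have hfinal : ‖f - g.comp ⟨φ, hφc⟩‖ = d := le_antisymm hub hlb
  refine ⟨g, ?_, hfinal⟩
  have hmem : g.comp ⟨φ, hφc⟩ ∈ {h : C(X, ℝ) | ∃ g' : C(Y, ℝ), h = g'.comp ⟨φ, hφc⟩} :=
    ⟨g, rfl⟩
  refine le_antisymm ?_ ?_
  · rw [hfinal]
    by_contra hcon
    push_neg at hcon
    obtain ⟨p, hp, hpd⟩ := (Metric.infDist_lt_iff ⟨_, hmem⟩).mp hcon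
    obtain ⟨h, rfl⟩ := hp
    have hlb2 := lower_bound φ hφc f h
    rw [← hd, ← dist_eq_norm] at hlb2
    linarith
  · calc Metric.infDist f {h : C(X, ℝ) | ∃ g' : C(Y, ℝ), h = g'.comp ⟨φ, hφc⟩}
        ≤ dist f (g.comp ⟨φ, hφc⟩) := Metric.infDist_le_dist_of_mem hmem
      _ = ‖f - g.comp ⟨φ, hφc⟩‖ := dist_eq_norm _ _
end

section
/- Let X and Y be compact Hausdorff spaces and f : X → Y a continuous surjection. Then the following are equivalent: (1) f is fully closed; (2) for any two disjoint closed subsets F₁, F₂ ⊆ X the set f(F₁) ∩ f(F₂) is finite; (3) for every open U ⊆ X and every y ∈ Y the set (f⁻¹(y) ∩ U) ∪ f⁻¹(f^#(U)) is open in X; (4) for every subset M ⊆ Y the quotient space Y^M_f is Hausdorff. -/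
open Set Topology

/-- The small image `f^#(A) := Y \ f(X \ A)`. -/
def smallImage {X Y : Type*} (f : X → Y) (A : Set X) : Set Y := (f '' Aᶜ)ᶜ

/-- `f` is fully closed at `y` if for every finite open cover `U₁, …, Uₛ` of `f⁻¹(y)`,
the set `{y} ∪ ⋃ᵢ f^#(Uᵢ)` is a neighborhood of `y`. -/
def FullyClosedAt {X Y : Type*} [TopologicalSpace X] [TopologicalSpace Y]
    (f : X → Y) (y : Y) : Prop :=
  ∀ (s : ℕ) (U : Fin s → Set X), (∀ i, IsOpen (U i)) → (f ⁻¹' {y} ⊆ ⋃ i, U i) →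
    ({y} ∪ ⋃ i, smallImage f (U i)) ∈ nhds y

/-- A continuous surjection is fully closed if it is fully closed at every point. -/
def FullyClosed {X Y : Type*} [TopologicalSpace X] [TopologicalSpace Y] (f : X → Y) : Prop :=
  Continuous f ∧ Function.Surjective f ∧ ∀ y, FullyClosedAt f y

/-- The equivalence relation on `X` whose classes are the singletons inside `f⁻¹(M)`
and the whole fibers `f⁻¹(y)` for `y ∉ M`; its quotient is the space `Y^M_f`. -/
def fiberSetoid {X Y : Type*} (f : X → Y) (M : Set Y) : Setoid X where
  r x x' := x = x' ∨ (f x = f x' ∧ f x ∉ M)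
  iseqv := by
    constructor
    · exact fun x => Or.inl rfl
    · rintro x y (rfl | ⟨h1, h2⟩)
      · exact Or.inl rfl
      · exact Or.inr ⟨h1.symm, h1 ▸ h2⟩
    · rintro x y z (rfl | ⟨h1, h2⟩) h
      · exact h
      · rcases h with rfl | ⟨h3, h4⟩
        · exact Or.inr ⟨h1, h2⟩
        · exact Or.inr ⟨h1.trans h3, h2⟩

section Aux

variable {X Y : Type} [TopologicalSpace X] [TopologicalSpace Y]

lemma mem_smallImage {f : X → Y} {U : Set X} {y : Y} :
    y ∈ smallImage f U ↔ f ⁻¹' {y} ⊆ U := by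
  constructor
  · intro h x hx
    by_contra hxU
    exact h ⟨x, hxU, hx⟩
  · rintro h ⟨x, hxU, hx⟩
    exact hxU (h hx)

lemma preimage_smallImage_subset {f : X → Y} {U : Set X} :
    f ⁻¹' (smallImage f U) ⊆ U := fun x hx =>
  mem_smallImage.mp hx rfl

lemma isOpen_smallImage {f : X → Y} (hf : IsClosedMap f) {U : Set X} (hU : IsOpen U) :
    IsOpen (smallImage f U) :=
  (hf _ hU.isClosed_compl).isOpen_compl

/-- A quotient of a compact Hausdorff space by a closed equivalence relation is Hausdorff. -/
lemma t2_quotient_of_isClosed [CompactSpace X] [T2Space X]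
    (s : Setoid X) (hR : IsClosed {p : X × X | s.r p.1 p.2}) : T2Space (Quotient s) := by
  have hq : IsQuotientMap (Quotient.mk s) := isQuotientMap_quot_mk
  -- the quotient map is closed
  have hclosed : ∀ C : Set X, IsClosed C → IsClosed (Quotient.mk s '' C) := by
    intro C hC
    rw [← hq.isClosed_preimage]
    have heq : Quotient.mk s ⁻¹' (Quotient.mk s '' C) =
        Prod.fst '' ({p : X × X | s.r p.1 p.2} ∩ (univ ×ˢ C)) := by
      ext x
      simp only [mem_preimage, mem_image, mem_inter_iff, mem_prod, mem_univ, true_and,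
        mem_setOf_eq]
      constructor
      · rintro ⟨c, hcC, hc⟩
        exact ⟨(x, c), ⟨s.symm (Quotient.exact hc), hcC⟩, rfl⟩
      · rintro ⟨⟨a, c⟩, ⟨hr, hcC⟩, rfl⟩
        exact ⟨c, hcC, (Quotient.sound hr).symm⟩
    rw [heq]
    exact (((hR.inter (isClosed_univ.prod hC)).isCompact).image continuous_fst).isClosed
  constructor
  intro q₁ q₂ hne
  obtain ⟨x₁, rfl⟩ := Quotient.exists_rep q₁
  obtain ⟨x₂, rfl⟩ := Quotient.exists_rep q₂
  set C₁ : Set X := {z | s.r z x₁} with hC₁def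
  set C₂ : Set X := {z | s.r z x₂} with hC₂def
  have hC₁ : IsClosed C₁ := hR.preimage (continuous_id.prodMk continuous_const)
  have hC₂ : IsClosed C₂ := hR.preimage (continuous_id.prodMk continuous_const)
  have hdisj : Disjoint C₁ C₂ := by
    rw [Set.disjoint_left]
    intro z hz₁ hz₂
    exact hne (Quotient.sound (s.trans (s.symm hz₁) hz₂))
  obtain ⟨U₁, U₂, hU₁, hU₂, hCU₁, hCU₂, hUdisj⟩ := NormalSpace.normal C₁ C₂ hC₁ hC₂ hdisj
  refine ⟨(Quotient.mk s '' U₁ᶜ)ᶜ, (Quotient.mk s '' U₂ᶜ)ᶜ,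
    (hclosed _ hU₁.isClosed_compl).isOpen_compl,
    (hclosed _ hU₂.isClosed_compl).isOpen_compl, ?_, ?_, ?_⟩
  · rintro ⟨z, hz, hzeq⟩
    exact hz (hCU₁ (show s.r z x₁ from Quotient.exact hzeq))
  · rintro ⟨z, hz, hzeq⟩
    exact hz (hCU₂ (show s.r z x₂ from Quotient.exact hzeq))
  · rw [Set.disjoint_left]
    rintro q hq₁ hq₂
    obtain ⟨z, rfl⟩ := Quotient.exists_rep q
    by_cases hz₁ : z ∈ U₁
    · by_cases hz₂ : z ∈ U₂
      · exact Set.disjoint_left.mp hUdisj hz₁ hz₂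
      · exact hq₂ ⟨z, hz₂, rfl⟩
    · exact hq₁ ⟨z, hz₁, rfl⟩

end Aux

/-- Let `X` and `Y` be compact Hausdorff spaces and `f : X → Y` a continuous surjection.
The following are equivalent: (1) `f` is fully closed; (2) for disjoint closed `F₁, F₂ ⊆ X`
the set `f(F₁) ∩ f(F₂)` is finite; (3) for every open `U ⊆ X` and `y ∈ Y` the set
`(f⁻¹(y) ∩ U) ∪ f⁻¹(f^#(U))` is open; (4) for every `M ⊆ Y` the quotient `Y^M_f` is Hausdorff. -/
theorem stmt1 {X Y : Type} [TopologicalSpace X] [CompactSpace X] [T2Space X]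
    [TopologicalSpace Y] [CompactSpace Y] [T2Space Y]
    (f : X → Y) (hfc : Continuous f) (hfs : Function.Surjective f) :
    List.TFAE
      [∀ y, FullyClosedAt f y,
       ∀ F₁ F₂ : Set X, IsClosed F₁ → IsClosed F₂ → Disjoint F₁ F₂ →
         (f '' F₁ ∩ f '' F₂).Finite,
       ∀ U : Set X, IsOpen U → ∀ y : Y,
         IsOpen ((f ⁻¹' {y} ∩ U) ∪ f ⁻¹' (smallImage f U)),
       ∀ M : Set Y, T2Space (Quotient (fiberSetoid f M))] := by
  have hcm : IsClosedMap f := hfc.isClosedMap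
  tfae_have 1 → 3 := by
    intro h1 U hU y
    rw [isOpen_iff_mem_nhds]
    rintro x (⟨hxy, hxU⟩ | hx)
    · -- x in the fiber part
      have hxy' : f x = y := hxy
      obtain ⟨W, hWopen, hxW, hWcl⟩ := normal_exists_closure_subset isClosed_singleton hU
        (singleton_subset_iff.mpr hxU)
      set V : Fin 2 → Set X := ![U, (closure W)ᶜ] with hV
      have hVopen : ∀ i, IsOpen (V i) := by
        intro i
        fin_cases i
        · exact hU
        · exact isClosed_closure.isOpen_compl
      have hcover : f ⁻¹' {y} ⊆ ⋃ i, V i := by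
        intro z _
        by_cases hz : z ∈ closure W
        · exact mem_iUnion.mpr ⟨0, hWcl hz⟩
        · exact mem_iUnion.mpr ⟨1, hz⟩
      have hO := h1 y 2 V hVopen hcover
      have hN : W ∩ f ⁻¹' ({y} ∪ ⋃ i, smallImage f (V i)) ∈ nhds x :=
        Filter.inter_mem (hWopen.mem_nhds (hxW rfl))
          (hfc.continuousAt (hxy' ▸ hO))
      refine Filter.mem_of_superset hN ?_
      rintro z ⟨hzW, hzO⟩
      rcases hzO with hzy | hzU
      · exact Or.inl ⟨hzy, hWcl (subset_closure hzW)⟩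
      · obtain ⟨i, hi⟩ := mem_iUnion.mp hzU
        fin_cases i
        · exact Or.inr hi
        · exact absurd (subset_closure hzW)
            (mem_smallImage.mp hi (show z ∈ f ⁻¹' {f z} from rfl))
    · exact Filter.mem_of_superset
        (((isOpen_smallImage hcm hU).preimage hfc).mem_nhds hx) subset_union_right
  tfae_have 3 → 1 := by
    intro h3 y s U hUopen hcover
    set W : Set X := ⋃ i, ((f ⁻¹' {y} ∩ U i) ∪ f ⁻¹' (smallImage f (U i))) with hWdef
    have hWopen : IsOpen W := isOpen_iUnion fun i => h3 (U i) (hUopen i) y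
    have hfib : f ⁻¹' {y} ⊆ W := by
      intro z hz
      obtain ⟨i, hi⟩ := mem_iUnion.mp (hcover hz)
      exact mem_iUnion.mpr ⟨i, Or.inl ⟨hz, hi⟩⟩
    have hy : y ∈ smallImage f W := mem_smallImage.mpr hfib
    refine Filter.mem_of_superset ((isOpen_smallImage hcm hWopen).mem_nhds hy) ?_
    intro z hz
    by_cases hzy : z = y
    · exact Or.inl hzy
    · obtain ⟨x, hx⟩ := hfs z
      have hxW : x ∈ W := mem_smallImage.mp hz (by simp [hx])
      obtain ⟨i, hi⟩ := mem_iUnion.mp hxW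
      rcases hi with ⟨h1, _⟩ | h2
      · exact absurd (hx ▸ h1) hzy
      · exact Or.inr (mem_iUnion.mpr ⟨i, hx ▸ h2⟩)
  tfae_have 3 → 2 := by
    intro h3 F₁ F₂ hF₁ hF₂ hdisj
    by_contra hinf
    have hinf' : (f '' F₁ ∩ f '' F₂).Infinite := hinf
    obtain ⟨y₀, hy₀acc⟩ := hinf'.exists_accPt_principal
    have hAcl : IsClosed (f '' F₁ ∩ f '' F₂) := (hcm _ hF₁).inter (hcm _ hF₂)
    have hy₀A : y₀ ∈ f '' F₁ ∩ f '' F₂ := by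
      rw [← hAcl.closure_eq]
      exact mem_closure_iff_clusterPt.mpr hy₀acc.clusterPt
    obtain ⟨⟨x₀, hx₀F, hx₀f⟩, _⟩ := hy₀A
    set U : Set X := F₂ᶜ with hUdef
    have hUopen : IsOpen U := hF₂.isOpen_compl
    set W := (f ⁻¹' {y₀} ∩ U) ∪ f ⁻¹' (smallImage f U) with hWdef
    have hWopen : IsOpen W := h3 U hUopen y₀
    have hV : (f '' (F₁ ∩ Wᶜ))ᶜ ∈ nhds y₀ := by
      refine (hcm _ (hF₁.inter hWopen.isClosed_compl)).isOpen_compl.mem_nhds ?_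
      rintro ⟨x, ⟨hxF, hxW⟩, hxf⟩
      exact hxW (Or.inl ⟨hxf, Set.disjoint_left.mp hdisj hxF⟩)
    have hne : ((f '' (F₁ ∩ Wᶜ))ᶜ ∩ ({y₀}ᶜ ∩ (f '' F₁ ∩ f '' F₂))).Nonempty := by
      haveI : Filter.NeBot (nhdsWithin y₀ {y₀}ᶜ ⊓ Filter.principal (f '' F₁ ∩ f '' F₂)) := hy₀acc
      apply Filter.nonempty_of_mem
        (f := nhdsWithin y₀ {y₀}ᶜ ⊓ Filter.principal (f '' F₁ ∩ f '' F₂))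
      refine Filter.inter_mem ?_ (Filter.inter_mem ?_ ?_)
      · exact Filter.mem_inf_of_left (mem_nhdsWithin_of_mem_nhds hV)
      · exact Filter.mem_inf_of_left self_mem_nhdsWithin
      · exact Filter.mem_inf_of_right (Filter.mem_principal_self _)
    obtain ⟨y, hyV, hyne, ⟨x₁, hx₁F, hx₁f⟩, ⟨x₂, hx₂F, hx₂f⟩⟩ := hne
    have hx₁W : x₁ ∈ W := by
      by_contra hx₁W
      exact hyV ⟨x₁, ⟨hx₁F, hx₁W⟩, hx₁f⟩
    rcases hx₁W with ⟨h1, _⟩ | h2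
    · exact hyne (hx₁f ▸ h1)
    · have : x₂ ∈ U := mem_smallImage.mp h2
        (show x₂ ∈ f ⁻¹' {f x₁} by simp [mem_preimage, hx₁f, hx₂f])
      exact this hx₂F
  tfae_have 2 → 3 := by
    intro h2 U hU y
    rw [isOpen_iff_mem_nhds]
    rintro x (⟨hxy, hxU⟩ | hx)
    · by_contra hT
      have hxy' : f x = y := hxy
      obtain ⟨G, hGopen, hxG, hGcl⟩ := normal_exists_closure_subset isClosed_singleton hU
        (singleton_subset_iff.mpr hxU)
      set T := (f ⁻¹' {y} ∩ U) ∪ f ⁻¹' (smallImage f U) with hTdef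
      set S := G ∩ Tᶜ with hSdef
      have hxcl : x ∈ closure S := by
        rw [mem_closure_iff]
        intro o ho hxo
        by_contra hempty
        rw [Set.not_nonempty_iff_eq_empty] at hempty
        have hsub : o ∩ G ⊆ T := by
          intro z ⟨hzo, hzG⟩
          by_contra hzT
          exact absurd (Set.eq_empty_iff_forall_notMem.mp hempty z ⟨hzo, hzG, hzT⟩) (by simp)
        exact hT (Filter.mem_of_superset
          ((ho.inter hGopen).mem_nhds ⟨hxo, hxG rfl⟩) hsub)
      have hfin : (f '' closure S ∩ f '' Uᶜ).Finite :=
        h2 (closure S) Uᶜ isClosed_closure hU.isClosed_compl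
          (Set.disjoint_left.mpr fun z hz hzc =>
            hzc (hGcl (closure_mono Set.inter_subset_left hz)))
      have hsub : f '' S ⊆ f '' closure S ∩ f '' Uᶜ := by
        rintro _ ⟨z, ⟨hzG, hzT⟩, rfl⟩
        refine ⟨⟨z, subset_closure ⟨hzG, hzT⟩, rfl⟩, ?_⟩
        have : z ∉ f ⁻¹' (smallImage f U) := fun h => hzT (Or.inr h)
        simpa [smallImage] using this
      have hySfin : (f '' S).Finite := hfin.subset hsub
      have hyS : y ∈ f '' S := by
        rw [← hySfin.isClosed.closure_eq]
        exact hxy' ▸ (image_closure_subset_closure_image hfc ⟨x, hxcl, rfl⟩)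
      obtain ⟨z, ⟨hzG, hzT⟩, hzf⟩ := hyS
      exact hzT (Or.inl ⟨hzf, hGcl (subset_closure hzG)⟩)
    · exact Filter.mem_of_superset
        (((isOpen_smallImage hcm hU).preimage hfc).mem_nhds hx) subset_union_right
  tfae_have 3 → 4 := by
    intro h3 M
    apply t2_quotient_of_isClosed
    rw [← isOpen_compl_iff, isOpen_iff_mem_nhds]
    rintro ⟨x, x'⟩ hp
    have hp' : ¬(x = x' ∨ (f x = f x' ∧ f x ∉ M)) := hp
    push_neg at hp'
    obtain ⟨hne, hM⟩ := hp'
    by_cases hxy : f x = f x'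
    · obtain ⟨U, U', hU, hU', hxU, hx'U', hUdisj⟩ := t2_separation hne
      have hW : IsOpen ((f ⁻¹' {f x} ∩ U) ∪ f ⁻¹' (smallImage f U)) := h3 U hU (f x)
      have hW' : IsOpen ((f ⁻¹' {f x} ∩ U') ∪ f ⁻¹' (smallImage f U')) := h3 U' hU' (f x)
      have hmem : (((f ⁻¹' {f x} ∩ U) ∪ f ⁻¹' (smallImage f U)) ∩ U) ×ˢ
          (((f ⁻¹' {f x} ∩ U') ∪ f ⁻¹' (smallImage f U')) ∩ U') ∈ nhds (x, x') := by
        apply prod_mem_nhds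
        · exact ((hW.inter hU).mem_nhds ⟨Or.inl ⟨rfl, hxU⟩, hxU⟩)
        · exact ((hW'.inter hU').mem_nhds ⟨Or.inl ⟨hxy.symm, hx'U'⟩, hx'U'⟩)
      refine Filter.mem_of_superset hmem ?_
      rintro ⟨u, v⟩ ⟨⟨huW, huU⟩, hvW, hvU⟩
      intro hr
      rcases (show u = v ∨ (f u = f v ∧ f u ∉ M) from hr) with rfl | ⟨hfe, hfM⟩
      · exact Set.disjoint_left.mp hUdisj huU hvU
      · rcases huW with ⟨h1, _⟩ | h1
        · exact hfM (h1 ▸ hM hxy)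
        · have : v ∈ U := mem_smallImage.mp h1 (show v ∈ f ⁻¹' {f u} from hfe.symm)
          exact Set.disjoint_left.mp hUdisj this hvU
    · obtain ⟨B, B', hB, hB', hfB, hfB', hBdisj⟩ := t2_separation hxy
      have hmem : (f ⁻¹' B) ×ˢ (f ⁻¹' B') ∈ nhds (x, x') :=
        prod_mem_nhds ((hB.preimage hfc).mem_nhds hfB)
          ((hB'.preimage hfc).mem_nhds hfB')
      refine Filter.mem_of_superset hmem ?_
      rintro ⟨u, v⟩ ⟨hu, hv⟩
      intro hr
      have hfuv : f u ≠ f v := fun h => Set.disjoint_left.mp hBdisj hu (h ▸ hv)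
      rcases (show u = v ∨ (f u = f v ∧ f u ∉ M) from hr) with rfl | ⟨hfe, _⟩
      · exact hfuv rfl
      · exact hfuv hfe
  tfae_have 4 → 2 := by
    intro h4 F₁ F₂ hF₁ hF₂ hdisj
    by_contra hinf
    have hinf' : (f '' F₁ ∩ f '' F₂).Infinite := hinf
    obtain ⟨y₀, hy₀acc⟩ := hinf'.exists_accPt_principal
    set A := f '' F₁ ∩ f '' F₂ with hAdef
    have hFne : Filter.NeBot (nhdsWithin y₀ {y₀}ᶜ ⊓ Filter.principal A) := hy₀acc
    obtain ⟨𝒰, h𝒰⟩ := Filter.exists_ultrafilter_le (nhdsWithin y₀ {y₀}ᶜ ⊓ Filter.principal A)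
    have hA𝒰 : A ∈ 𝒰 := h𝒰 (Filter.mem_inf_of_right (Filter.mem_principal_self A))
    have hne𝒰 : ({y₀}ᶜ : Set Y) ∈ 𝒰 := h𝒰 (Filter.mem_inf_of_left self_mem_nhdsWithin)
    have h𝒰nhds : (𝒰 : Filter Y) ≤ nhds y₀ := h𝒰.trans (inf_le_left.trans nhdsWithin_le_nhds)
    have hchoice₁ : ∀ y : Y, ∃ x : X, y ∈ f '' F₁ → (x ∈ F₁ ∧ f x = y) := by
      intro y
      by_cases hy : y ∈ f '' F₁
      · obtain ⟨x, hx1, hx2⟩ := hy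
        exact ⟨x, fun _ => ⟨hx1, hx2⟩⟩
      · exact ⟨(hfs y).choose, fun h => absurd h hy⟩
    have hchoice₂ : ∀ y : Y, ∃ x : X, y ∈ f '' F₂ → (x ∈ F₂ ∧ f x = y) := by
      intro y
      by_cases hy : y ∈ f '' F₂
      · obtain ⟨x, hx1, hx2⟩ := hy
        exact ⟨x, fun _ => ⟨hx1, hx2⟩⟩
      · exact ⟨(hfs y).choose, fun h => absurd h hy⟩
    choose a ha using hchoice₁
    choose b hb using hchoice₂
    obtain ⟨x₁, -, hlim₁'⟩ := isCompact_univ.ultrafilter_le_nhds (𝒰.map a)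
      (Filter.le_principal_iff.mpr Filter.univ_mem)
    obtain ⟨x₂, -, hlim₂'⟩ := isCompact_univ.ultrafilter_le_nhds (𝒰.map b)
      (Filter.le_principal_iff.mpr Filter.univ_mem)
    have hlim₁ : Filter.Tendsto a 𝒰 (nhds x₁) := hlim₁'
    have hlim₂ : Filter.Tendsto b 𝒰 (nhds x₂) := hlim₂'
    have hx₁F : x₁ ∈ F₁ := hF₁.mem_of_tendsto hlim₁
      (Filter.eventually_of_mem hA𝒰 fun y hy => (ha y hy.1).1)
    have hx₂F : x₂ ∈ F₂ := hF₂.mem_of_tendsto hlim₂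
      (Filter.eventually_of_mem hA𝒰 fun y hy => (hb y hy.2).1)
    have hfa : f x₁ = y₀ := by
      refine tendsto_nhds_unique ((hfc.tendsto x₁).comp hlim₁) ?_
      refine Filter.Tendsto.congr' ?_ h𝒰nhds
      exact Filter.eventually_of_mem hA𝒰 fun y hy => ((ha y hy.1).2).symm
    have hfb : f x₂ = y₀ := by
      refine tendsto_nhds_unique ((hfc.tendsto x₂).comp hlim₂) ?_
      refine Filter.Tendsto.congr' ?_ h𝒰nhds
      exact Filter.eventually_of_mem hA𝒰 fun y hy => ((hb y hy.2).2).symm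
    haveI hT2 := h4 {y₀}
    have hqc : Continuous (Quotient.mk (fiberSetoid f {y₀})) := continuous_quot_mk
    have hq1 : Filter.Tendsto (fun y => Quotient.mk (fiberSetoid f {y₀}) (a y)) 𝒰
        (nhds (Quotient.mk (fiberSetoid f {y₀}) x₁)) := (hqc.tendsto x₁).comp hlim₁
    have hq2 : Filter.Tendsto (fun y => Quotient.mk (fiberSetoid f {y₀}) (b y)) 𝒰
        (nhds (Quotient.mk (fiberSetoid f {y₀}) x₂)) := (hqc.tendsto x₂).comp hlim₂
    have hcongr : (fun y => Quotient.mk (fiberSetoid f {y₀}) (a y)) =ᶠ[(𝒰 : Filter Y)]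
        (fun y => Quotient.mk (fiberSetoid f {y₀}) (b y)) := by
      refine Filter.eventually_of_mem (Filter.inter_mem hA𝒰 hne𝒰) ?_
      rintro y ⟨hyA, hyne⟩
      refine Quotient.sound (Or.inr ⟨?_, ?_⟩)
      · rw [(ha y hyA.1).2, (hb y hyA.2).2]
      · rw [(ha y hyA.1).2]
        exact hyne
    have heq : Quotient.mk (fiberSetoid f {y₀}) x₁ = Quotient.mk (fiberSetoid f {y₀}) x₂ :=
      tendsto_nhds_unique hq1 (hq2.congr' hcongr.symm)
    rcases Quotient.exact heq with rfl | ⟨-, hM⟩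
    · exact Set.disjoint_left.mp hdisj hx₁F hx₂F
    · exact hM (hfa ▸ rfl)
  tfae_finish
end

section
/- Let f : X → Y and g : Y → Z be continuous surjections between compact Hausdorff spaces. Suppose g ∘ f is fully closed at a point z ∈ Z and let y ∈ g⁻¹(z). If f⁻¹(y) is a singleton or if g⁻¹(g(y)) = {y}, then f is fully closed at y. -/
open Set Topology

/-- Let `f : X → Y` and `g : Y → Z` be continuous surjections between compact Hausdorff
spaces, suppose `g ∘ f` is fully closed at `z ∈ Z` and let `y ∈ g⁻¹(z)`. If `f⁻¹(y)` is a
singleton or `g⁻¹(g(y)) = {y}`, then `f` is fully closed at `y`. -/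
theorem stmt2 {X Y Z : Type} [TopologicalSpace X] [CompactSpace X] [T2Space X]
    [TopologicalSpace Y] [CompactSpace Y] [T2Space Y]
    [TopologicalSpace Z] [CompactSpace Z] [T2Space Z]
    (f : X → Y) (g : Y → Z) (hfc : Continuous f) (hfs : Function.Surjective f)
    (hgc : Continuous g) (hgs : Function.Surjective g)
    (z : Z) (hfcomp : FullyClosedAt (g ∘ f) z) (y : Y) (hy : g y = z)
    (hone : (∃ x : X, f ⁻¹' {y} = {x}) ∨ g ⁻¹' {g y} = {y}) :
    FullyClosedAt f y := by
  intro s U hU hcov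
  rcases hone with ⟨x, hx⟩ | hg
  · have hxy : f x = y := by
      have : x ∈ f ⁻¹' {y} := hx ▸ rfl
      simpa using this
    have hxU : x ∈ ⋃ i, U i := hcov (by simpa [hxy])
    obtain ⟨i, hi⟩ := mem_iUnion.mp hxU
    have hopen : IsOpen (smallImage f (U i)) := by
      have := (hfc.isClosedMap (U i)ᶜ (hU i).isClosed_compl)
      exact this.isOpen_compl
    have hymem : y ∈ smallImage f (U i) := by
      intro hmem
      obtain ⟨x', hx', hfx'⟩ := hmem
      have : x' ∈ f ⁻¹' {y} := by simp [hfx']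
      rw [hx] at this
      exact hx' (this ▸ hi)
    refine Filter.mem_of_superset (hopen.mem_nhds hymem) ?_
    intro y' hy'
    exact Or.inr (mem_iUnion.mpr ⟨i, hy'⟩)
  · subst hy
    have hpre : (g ∘ f) ⁻¹' {g y} ⊆ ⋃ i, U i := by
      intro x hxm
      apply hcov
      have : f x ∈ g ⁻¹' {g y} := hxm
      rw [hg] at this
      simpa using this
    have hW := hfcomp s U hU hpre
    have hWpre : g ⁻¹' ({g y} ∪ ⋃ i, smallImage (g ∘ f) (U i)) ∈ nhds y :=
      hgc.continuousAt.preimage_mem_nhds hW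
    refine Filter.mem_of_superset hWpre ?_
    intro y' hy'
    rcases hy' with h1 | h2
    · left
      have : y' ∈ g ⁻¹' {g y} := h1
      rw [hg] at this
      exact this
    · right
      obtain ⟨i, hi⟩ := mem_iUnion.mp h2
      refine mem_iUnion.mpr ⟨i, ?_⟩
      intro hmem
      obtain ⟨x', hx', hfx'⟩ := hmem
      exact hi ⟨x', hx', by simp [Function.comp, hfx']⟩
end

section
/- Let f : X → Y be a fully closed surjection between compact Hausdorff spaces and let M ⊆ Y. Then the quotient mapping p^M_f : X → Y^M_f is also fully closed. -/
open Set Topology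

/-- Let `f : X → Y` be a fully closed surjection between compact Hausdorff spaces and
`M ⊆ Y`. Then the quotient map `p^M_f : X → Y^M_f` is also fully closed. -/
theorem stmt3 {X Y : Type} [TopologicalSpace X] [CompactSpace X] [T2Space X]
    [TopologicalSpace Y] [CompactSpace Y] [T2Space Y]
    (f : X → Y) (hf : FullyClosed f) (M : Set Y) :
    FullyClosed (Quotient.mk (fiberSetoid f M)) := by
  obtain ⟨hfcont, hfsurj, hfc⟩ := hf
  set S : Setoid X := fiberSetoid f M with hS
  set p : X → Quotient S := Quotient.mk S with hp
  have hclosed : IsClosedMap f := hfcont.isClosedMap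
  have hpcont : Continuous p := continuous_quot_mk
  have hrel : ∀ {a b : X}, p a = p b → (a = b ∨ (f a = f b ∧ f a ∉ M)) := by
    intro a b h
    exact Quotient.exact h
  have hrel' : ∀ {a b : X}, (a = b ∨ (f a = f b ∧ f a ∉ M)) → p a = p b := by
    intro a b h
    exact Quotient.sound h
  -- openness criterion in the quotient
  have hopen : ∀ (W : Set X), IsOpen W → (p ⁻¹' (p '' W) = W) → IsOpen (p '' W) := by
    intro W hW hsat
    rw [show IsOpen (p '' W) ↔ IsOpen (p ⁻¹' (p '' W)) from isOpen_coinduced, hsat]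
    exact hW
  -- membership criterion for smallImage of p
  have hsmall : ∀ (A : Set X) (x : X), (∀ x', p x' = p x → x' ∈ A) →
      p x ∈ smallImage p A := by
    intro A x h hmem
    obtain ⟨x', hx', heq⟩ := hmem
    exact hx' (h x' heq)
  refine ⟨hpcont, fun z => Quotient.exists_rep z, ?_⟩
  intro z s U hUopen hcov
  obtain ⟨x₀, rfl⟩ := Quotient.exists_rep z
  by_cases hyM : f x₀ ∈ M
  · -- case `f x₀ ∈ M` : the class of `x₀` is the singleton `{x₀}`
    obtain ⟨i₀, hi₀⟩ : ∃ i, x₀ ∈ U i := by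
      have := hcov (show x₀ ∈ p ⁻¹' {Quotient.mk S x₀} from rfl)
      simpa using this
    obtain ⟨K, hKnhds, hKclosed, hKsub⟩ :=
      exists_mem_nhds_isClosed_subset ((hUopen i₀).mem_nhds hi₀)
    set G : Set Y := smallImage f (U i₀) with hG
    have hGfib : ∀ x : X, f x ∈ G → f ⁻¹' {f x} ⊆ U i₀ := by
      intro x hx x' hx'
      by_contra hx'U
      exact hx ⟨x', hx'U, hx'⟩
    have hcov2 : f ⁻¹' {f x₀} ⊆ ⋃ i, ![U i₀, Kᶜ] i := by
      intro x _
      by_cases hxK : x ∈ K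
      · exact mem_iUnion.2 ⟨0, hKsub hxK⟩
      · exact mem_iUnion.2 ⟨1, hxK⟩
    have hN := hfc (f x₀) 2 ![U i₀, Kᶜ]
      (by intro i; fin_cases i <;> simp [hUopen i₀, hKclosed.isOpen_compl]) hcov2
    obtain ⟨N₀, hN₀sub, hN₀open, hyN₀⟩ := mem_nhds_iff.1 hN
    -- any point of `K ∩ f⁻¹ N₀` has image in `{f x₀} ∪ G`
    have hkey : ∀ x : X, x ∈ K → f x ∈ N₀ → f x = f x₀ ∨ f x ∈ G := by
      intro x hxK hxN
      have := hN₀sub hxN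
      rcases this with h | h
      · exact Or.inl h
      · rw [mem_iUnion] at h
        obtain ⟨i, hi⟩ := h
        fin_cases i
        · exact Or.inr hi
        · exact absurd ⟨x, by simpa using hxK, rfl⟩ hi
    set W : Set X := (interior K ∩ f ⁻¹' N₀) ∪ f ⁻¹' G with hW
    have hWopen : IsOpen W := by
      refine ((isOpen_interior.inter (hN₀open.preimage hfcont)).union
        (IsOpen.preimage hfcont ?_))
      exact (hclosed _ (hUopen i₀).isClosed_compl).isOpen_compl
    have hx₀W : x₀ ∈ W := Or.inl ⟨mem_interior_iff_mem_nhds.2 hKnhds, hyN₀⟩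
    -- every point of W is either in f⁻¹ G, or maps to f x₀
    have hWcases : ∀ x ∈ W, f x ∈ G ∨ f x = f x₀ := by
      rintro x (⟨hxK, hxN⟩ | hxG)
      · rcases hkey x (interior_subset hxK) hxN with h | h
        · exact Or.inr h
        · exact Or.inl h
      · exact Or.inl hxG
    have hsat : p ⁻¹' (p '' W) = W := by
      apply Subset.antisymm
      · rintro x ⟨w, hwW, hpw⟩
        rcases hrel hpw.symm with rfl | ⟨hfx, hfM⟩
        · exact hwW
        · rcases hWcases w hwW with h | h
          · exact Or.inr (by rw [mem_preimage, hfx]; exact h)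
          · exact absurd (hfx ▸ (h ▸ hyM)) hfM
      · exact subset_preimage_image p W
    have himg : p '' W ⊆ {Quotient.mk S x₀} ∪ ⋃ i, smallImage p (U i) := by
      rintro _ ⟨x, hxW, rfl⟩
      rcases hWcases x hxW with h | h
      · refine Or.inr (mem_iUnion.2 ⟨i₀, hsmall _ _ ?_⟩)
        intro x' hx'
        have hfx' : f x' = f x := by
          rcases hrel hx' with heq | ⟨hfx, _⟩
          · rw [heq]
          · exact hfx
        exact hGfib x h hfx'
      · by_cases hxx₀ : x = x₀
        · exact Or.inl (by simp [hxx₀]; rfl)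
        · -- f x = f x₀ ∈ M, so the class of x is {x}; and x ∈ U i₀
          have hxM : f x ∈ M := by rw [h]; exact hyM
          have hxU : x ∈ U i₀ := by
            rcases hxW with ⟨hxK, _⟩ | hxG
            · exact hKsub (interior_subset hxK)
            · exact hGfib x hxG rfl
          refine Or.inr (mem_iUnion.2 ⟨i₀, hsmall _ _ ?_⟩)
          intro x' hx'
          rcases hrel hx' with heq | ⟨hfx, hfM⟩
          · rw [heq]; exact hxU
          · exact absurd (show f x' ∈ M by rw [hfx]; exact hxM) hfM
    exact mem_nhds_iff.2 ⟨p '' W, himg, hopen W hWopen hsat, ⟨x₀, hx₀W, rfl⟩⟩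
  · -- case `f x₀ ∉ M` : the class of `x₀` is the whole fiber `f⁻¹ (f x₀)`
    have hfib : f ⁻¹' {f x₀} ⊆ ⋃ i, U i := by
      intro x hx
      refine hcov ?_
      have hfx : f x = f x₀ := hx
      simp only [mem_preimage, mem_singleton_iff]
      exact hrel' (Or.inr ⟨hfx, by rw [hfx]; exact hyM⟩)
    have hN := hfc (f x₀) s U hUopen hfib
    obtain ⟨N₀, hN₀sub, hN₀open, hyN₀⟩ := mem_nhds_iff.1 hN
    set W : Set X := f ⁻¹' N₀ with hW
    have hWopen : IsOpen W := hN₀open.preimage hfcont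
    have hsat : p ⁻¹' (p '' W) = W := by
      apply Subset.antisymm
      · rintro x ⟨w, hwW, hpw⟩
        rcases hrel hpw.symm with rfl | ⟨hfx, _⟩
        · exact hwW
        · rw [mem_preimage, hfx]; exact hwW
      · exact subset_preimage_image p W
    have himg : p '' W ⊆ {Quotient.mk S x₀} ∪ ⋃ i, smallImage p (U i) := by
      rintro _ ⟨x, hxW, rfl⟩
      rcases hN₀sub hxW with h | h
      · exact Or.inl (by
          simp only [mem_singleton_iff]
          exact hrel' (Or.inr ⟨h, by rw [h]; exact hyM⟩))
      · rw [mem_iUnion] at h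
        obtain ⟨i, hi⟩ := h
        have hfibU : f ⁻¹' {f x} ⊆ U i := by
          intro x' hx'
          by_contra hx'U
          exact hi ⟨x', hx'U, hx'⟩
        refine Or.inr (mem_iUnion.2 ⟨i, hsmall _ _ ?_⟩)
        intro x' hx'
        have hfx' : f x' = f x := by
          rcases hrel hx' with heq | ⟨hfx, _⟩
          · rw [heq]
          · exact hfx
        exact hfibU hfx'
    exact mem_nhds_iff.2 ⟨p '' W, himg, hopen W hWopen hsat, ⟨x₀, hyN₀, rfl⟩⟩
end

section
/- Let X = lim← S be the limit of an F-decomposable system S = {X_α, π^β_α : α ≤ β < γ}. Then every limit projection π_α : X → X_α (α < γ) is fully closed. -/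
open Set Topology

/-- A well-ordered inverse system of Hausdorff compacta indexed by the ordinals below `γ`,
with `X 0` a singleton and continuous surjective bonding maps `π : X β → X α` (`α ≤ β < γ`). -/
structure InvSystemAux (γ : Ordinal) where
  X : Ordinal → Type
  [topo : ∀ α, TopologicalSpace (X α)]
  compact : ∀ α, α < γ → CompactSpace (X α)
  t2 : ∀ α, α < γ → T2Space (X α)
  zero_nonempty : Nonempty (X 0)
  zero_subsingleton : Subsingleton (X 0)
  π : ∀ {α β : Ordinal}, α ≤ β → X β → X α
  π_cont : ∀ {α β : Ordinal} (h : α ≤ β), β < γ → Continuous (π h)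
  π_surj : ∀ {α β : Ordinal} (h : α ≤ β), β < γ → Function.Surjective (π h)
  π_id : ∀ {α : Ordinal} (h : α ≤ α) (x : X α), π h x = x
  π_comp : ∀ {α β δ : Ordinal} (h1 : α ≤ β) (h2 : β ≤ δ) (x : X δ),
    π h1 (π h2 x) = π (h1.trans h2) x

attribute [instance] InvSystemAux.topo

/-- The space of threads of the system below level `α` (so `S.lim γ` is the limit of the
system, a subspace of the product `∏_{β<γ} X β`). -/
def InvSystemAux.lim {γ : Ordinal} (S : InvSystemAux γ) (α : Ordinal) : Type 1 :=
  {p : ∀ β : Set.Iio α, S.X β // ∀ (β δ : Set.Iio α) (h : (β : Ordinal) ≤ δ), S.π h (p δ) = p β}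

instance {γ : Ordinal} (S : InvSystemAux γ) (α : Ordinal) : TopologicalSpace (S.lim α) :=
  instTopologicalSpaceSubtype

/-- The canonical map from `X α` to the space of threads below `α`. -/
def InvSystemAux.toLim {γ : Ordinal} (S : InvSystemAux γ) (α : Ordinal) (x : S.X α) :
    S.lim α :=
  ⟨fun β => S.π β.2.le x, fun _ δ h => S.π_comp h δ.2.le x⟩

/-- The limit projection from the limit of the system onto the level `α < γ`. -/
def InvSystemAux.proj {γ : Ordinal} (S : InvSystemAux γ) (α : Ordinal) (h : α < γ) :
    S.lim γ → S.X α :=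
  fun p => p.1 ⟨α, h⟩

/-- A well-ordered continuous inverse system of Hausdorff compacta: at every limit ordinal
`α < γ` the canonical map from `X α` to the inverse limit of the levels below `α` is a
homeomorphism. -/
structure InvSystem (γ : Ordinal) extends InvSystemAux γ where
  cont_limit : ∀ (α : Ordinal), α < γ → Order.IsSuccLimit α → IsHomeomorph (toInvSystemAux.toLim α)

/-- An inverse system is F-decomposable if all its bonding maps are fully closed. -/
def InvSystem.FDecomposable {γ : Ordinal} (S : InvSystem γ) : Prop :=
  ∀ {α β : Ordinal} (h : α ≤ β), β < γ → FullyClosed (S.π h)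

namespace InvSystemAux

variable {γ : Ordinal} (S : InvSystemAux γ)

theorem aux_nonempty (β : Set.Iio γ) : Nonempty (S.X β) := by
  obtain ⟨x⟩ := S.zero_nonempty
  obtain ⟨z, -⟩ := S.π_surj (zero_le (a := (β : Ordinal))) β.2 x
  exact ⟨z⟩

theorem proj_continuous (α : Ordinal) (hα : α < γ) : Continuous (S.proj α hα) :=
  (continuous_apply _).comp continuous_subtype_val

theorem proj_surjective (α : Ordinal) (hα : α < γ) :
    Function.Surjective (S.proj α hα) := by
  intro x
  haveI : ∀ δ : Set.Iio γ, CompactSpace (S.X δ) := fun δ => S.compact δ δ.2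
  haveI : ∀ δ : Set.Iio γ, T2Space (S.X δ) := fun δ => S.t2 δ δ.2
  haveI : ∀ δ : Set.Iio γ, Nonempty (S.X δ) := fun δ => S.aux_nonempty δ
  set D : Set.Iio γ → Set (∀ β : Set.Iio γ, S.X β) := fun η =>
    {p | p ⟨α, hα⟩ = x ∧ ∀ (β δ : Set.Iio γ) (h : (β : Ordinal) ≤ δ),
      (δ : Ordinal) ≤ (η : Ordinal) → S.π h (p δ) = p β} with hD
  have hanti : ∀ (η₁ η₂ : Set.Iio γ), (η₁ : Ordinal) ≤ η₂ → D η₂ ⊆ D η₁ := by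
    intro η₁ η₂ h p hp
    exact ⟨hp.1, fun β δ hbd hdn => hp.2 β δ hbd (hdn.trans h)⟩
  have hdir : Directed (· ⊇ ·) D := by
    intro η₁ η₂
    rcases le_total (η₁ : Ordinal) η₂ with h | h
    · exact ⟨η₂, hanti _ _ h, fun p hp => hp⟩
    · exact ⟨η₁, fun p hp => hp, hanti _ _ h⟩
  have hne : ∀ η, (D η).Nonempty := by
    intro η
    have hμ : max α (η : Ordinal) < γ := max_lt hα η.2
    obtain ⟨q, hq⟩ := S.π_surj (le_max_left α (η : Ordinal)) hμ x
    refine ⟨fun β => if h : (β : Ordinal) ≤ max α (η : Ordinal) then S.π h q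
      else Classical.arbitrary _, ?_, ?_⟩
    · simpa only [dif_pos (le_max_left α (η : Ordinal))] using hq
    · intro β δ hbd hdn
      have hδ : (δ : Ordinal) ≤ max α (η : Ordinal) := hdn.trans (le_max_right _ _)
      have hβ : (β : Ordinal) ≤ max α (η : Ordinal) := hbd.trans hδ
      simp only [dif_pos hδ, dif_pos hβ]
      exact S.π_comp hbd hδ q
  have hclosed : ∀ η, IsClosed (D η) := by
    intro η
    have : D η = {p : ∀ β : Set.Iio γ, S.X β | p ⟨α, hα⟩ = x} ∩
        ⋂ (β : Set.Iio γ) (δ : Set.Iio γ) (h : (β : Ordinal) ≤ δ)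
          (_ : (δ : Ordinal) ≤ (η : Ordinal)),
          {p : ∀ β : Set.Iio γ, S.X β | S.π h (p δ) = p β} := by
      ext p
      simp only [hD, Set.mem_setOf_eq, Set.mem_inter_iff, Set.mem_iInter]
    rw [this]
    refine (isClosed_eq (continuous_apply _) continuous_const).inter ?_
    refine isClosed_iInter fun β => isClosed_iInter fun δ => isClosed_iInter fun h =>
      isClosed_iInter fun _ => ?_
    exact isClosed_eq ((S.π_cont h δ.2).comp (continuous_apply _)) (continuous_apply _)
  have hcompact : ∀ η, IsCompact (D η) := fun η => (hclosed η).isCompact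
  haveI : Nonempty (Set.Iio γ) := ⟨⟨α, hα⟩⟩
  obtain ⟨p, hp⟩ := IsCompact.nonempty_iInter_of_directed_nonempty_isCompact_isClosed
    D hdir hne hcompact hclosed
  have hthread : ∀ (β δ : Set.Iio γ) (h : (β : Ordinal) ≤ δ), S.π h (p δ) = p β := by
    intro β δ h
    exact (Set.mem_iInter.mp hp δ).2 β δ h le_rfl
  exact ⟨⟨p, hthread⟩, (Set.mem_iInter.mp hp ⟨α, hα⟩).1⟩

theorem compactSpace_lim : CompactSpace (S.lim γ) := by
  haveI : ∀ δ : Set.Iio γ, CompactSpace (S.X δ) := fun δ => S.compact δ δ.2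
  haveI : ∀ δ : Set.Iio γ, T2Space (S.X δ) := fun δ => S.t2 δ δ.2
  have hL : IsClosed {p : ∀ β : Set.Iio γ, S.X β |
      ∀ (β δ : Set.Iio γ) (h : (β : Ordinal) ≤ δ), S.π h (p δ) = p β} := by
    have : {p : ∀ β : Set.Iio γ, S.X β |
        ∀ (β δ : Set.Iio γ) (h : (β : Ordinal) ≤ δ), S.π h (p δ) = p β} =
        ⋂ (β : Set.Iio γ) (δ : Set.Iio γ) (h : (β : Ordinal) ≤ δ),
          {p : ∀ β : Set.Iio γ, S.X β | S.π h (p δ) = p β} := by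
      ext p; simp only [Set.mem_setOf_eq, Set.mem_iInter]
    rw [this]
    refine isClosed_iInter fun β => isClosed_iInter fun δ => isClosed_iInter fun h => ?_
    exact isClosed_eq ((S.π_cont h δ.2).comp (continuous_apply _)) (continuous_apply _)
  exact isCompact_iff_compactSpace.mp hL.isCompact

theorem aux_basic (α₀ : Set.Iio γ) (x : S.lim γ) (O : Set (S.lim γ)) (hO : O ∈ nhds x) :
    ∃ (β : Set.Iio γ) (V : Set (S.X β)), IsOpen V ∧ x.1 β ∈ V ∧
      {p : S.lim γ | p.1 β ∈ V} ⊆ O := by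
  rw [show 𝓝 x = Filter.comap Subtype.val (𝓝 x.1) from nhds_induced Subtype.val x] at hO
  obtain ⟨T, hT, hTsub⟩ := Filter.mem_comap.mp hO
  rw [nhds_pi, Filter.mem_pi'] at hT
  obtain ⟨I, t, ht, htsub⟩ := hT
  choose V hVsub hVopen hxV using fun i => mem_nhds_iff.mp (ht i)
  have hμ : max (α₀ : Ordinal) (I.sup fun i => (i : Ordinal)) < γ := by
    refine max_lt α₀.2 ?_
    rcases I.eq_empty_or_nonempty with rfl | hIne
    · simpa using lt_of_le_of_lt (zero_le (a := _)) α₀.2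
    · rw [Finset.sup_lt_iff (by simpa using lt_of_le_of_lt (zero_le (a := (α₀ : Ordinal))) α₀.2)]
      exact fun i _ => i.2
  set μ : Set.Iio γ := ⟨max (α₀ : Ordinal) (I.sup fun i => (i : Ordinal)), hμ⟩ with hμdef
  have hle : ∀ i : I, ((i : Set.Iio γ) : Ordinal) ≤ (μ : Ordinal) :=
    fun i => (Finset.le_sup i.2).trans (le_max_right _ _)
  refine ⟨μ, ⋂ i : I, S.π (hle i) ⁻¹' V i, ?_, ?_, ?_⟩
  · exact isOpen_iInter_of_finite fun i => (hVopen i).preimage (S.π_cont (hle i) μ.2)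
  · refine Set.mem_iInter.mpr fun i => ?_
    have := x.2 i μ (hle i)
    rw [Set.mem_preimage, this]
    exact hxV i
  · intro p hp
    apply hTsub
    apply htsub
    intro i hi
    have hmem := Set.mem_iInter.mp hp ⟨i, hi⟩
    rw [Set.mem_preimage, p.2 i μ (hle ⟨i, hi⟩)] at hmem
    exact hVsub i hmem

end InvSystemAux
/-- Let `X = lim← S` be the limit of an F-decomposable system `S`. Then every limit
projection `π_α : X → X_α` (`α < γ`) is fully closed. -/
theorem stmt7 {γ : Ordinal} (S : InvSystem γ) (hFd : S.FDecomposable)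
    (α : Ordinal) (hα : α < γ) :
    FullyClosed (S.proj α hα) := by
  have hcont := S.toInvSystemAux.proj_continuous α hα
  refine ⟨hcont, S.toInvSystemAux.proj_surjective α hα, ?_⟩
  intro y s U hUopen hUcov
  haveI := S.toInvSystemAux.compactSpace_lim
  haveI : T2Space (S.X α) := S.t2 α hα
  set K : Set (S.lim γ) := S.proj α hα ⁻¹' {y} with hKdef
  have hKc : IsCompact K := (isClosed_singleton.preimage hcont).isCompact
  have key : ∀ x : K, ∃ (jx : Fin s) (β : Set.Iio γ) (V : Set (S.X β)),
      IsOpen V ∧ (x : S.lim γ).1 β ∈ V ∧ {p : S.lim γ | p.1 β ∈ V} ⊆ U jx := by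
    rintro ⟨x, hx⟩
    obtain ⟨jx, hj⟩ := Set.mem_iUnion.mp (hUcov hx)
    obtain ⟨β, V, h1, h2, h3⟩ := S.toInvSystemAux.aux_basic ⟨α, hα⟩ x (U jx)
      ((hUopen jx).mem_nhds hj)
    exact ⟨jx, β, V, h1, h2, h3⟩
  choose j β V hVopen hxV hVsub using key
  have hcov : K ⊆ ⋃ x : K, {p : S.lim γ | p.1 (β x) ∈ V x} := fun z hz =>
    Set.mem_iUnion.mpr ⟨⟨z, hz⟩, hxV ⟨z, hz⟩⟩
  obtain ⟨F, hF⟩ := hKc.elim_finite_subcover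
    (fun x : K => {p : S.lim γ | p.1 (β x) ∈ V x})
    (fun x => (hVopen x).preimage
      ((continuous_apply (β x)).comp continuous_subtype_val)) hcov
  have h0γ : (⊥ : Ordinal) < γ := by
    simpa using lt_of_le_of_lt (zero_le (a := α)) hα
  have hμlt : max α (F.sup fun x => ((β x) : Ordinal)) < γ := by
    refine max_lt hα ?_
    rcases F.eq_empty_or_nonempty with rfl | hne
    · simpa using h0γ
    · rw [Finset.sup_lt_iff h0γ]
      exact fun x _ => (β x).2
  set μ : Ordinal := max α (F.sup fun x => ((β x) : Ordinal)) with hμdef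
  have hαμ : α ≤ μ := le_max_left _ _
  have hβμ : ∀ x : F, ((β x.1) : Ordinal) ≤ μ :=
    fun x => le_trans (Finset.le_sup (f := fun x => ((β x) : Ordinal)) x.2) (le_max_right _ _)
  set W : Fin s → Set (S.X μ) :=
    fun k => ⋃ (x : F) (_ : j x.1 = k), S.π (hβμ x) ⁻¹' V x.1 with hWdef
  have hWopen : ∀ k, IsOpen (W k) := fun k =>
    isOpen_iUnion fun x => isOpen_iUnion fun _ =>
      (hVopen x.1).preimage (S.π_cont (hβμ x) hμlt)
  have hWcov : S.π hαμ ⁻¹' {y} ⊆ ⋃ k, W k := by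
    intro z hz
    rw [Set.mem_preimage, Set.mem_singleton_iff] at hz
    obtain ⟨p, hp⟩ := S.toInvSystemAux.proj_surjective μ hμlt z
    have hpμ : p.1 ⟨μ, hμlt⟩ = z := hp
    have hpK : p ∈ K := by
      have ht := p.2 ⟨α, hα⟩ ⟨μ, hμlt⟩ hαμ
      show p.1 ⟨α, hα⟩ ∈ ({y} : Set (S.X α))
      rw [← ht, hpμ, hz]
      exact rfl
    obtain ⟨x, hx⟩ := Set.mem_iUnion.mp (hF hpK)
    obtain ⟨hxF, hpx⟩ := Set.mem_iUnion.mp hx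
    refine Set.mem_iUnion.mpr ⟨j x, Set.mem_iUnion.mpr ⟨⟨x, hxF⟩,
      Set.mem_iUnion.mpr ⟨rfl, ?_⟩⟩⟩
    rw [Set.mem_preimage, ← hpμ, p.2 (β x) ⟨μ, hμlt⟩ (hβμ ⟨x, hxF⟩)]
    exact hpx
  have hN := (hFd hαμ hμlt).2.2 y s W hWopen hWcov
  refine Filter.mem_of_superset hN ?_
  rintro z (hz | hz)
  · exact Or.inl hz
  · right
    obtain ⟨k, hk⟩ := Set.mem_iUnion.mp hz
    refine Set.mem_iUnion.mpr ⟨k, ?_⟩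
    simp only [smallImage, Set.mem_compl_iff] at hk ⊢
    intro hmem
    obtain ⟨p, hpU, hpz⟩ := hmem
    apply hk
    refine ⟨p.1 ⟨μ, hμlt⟩, ?_, ?_⟩
    · intro hpW
      obtain ⟨x, hx⟩ := Set.mem_iUnion.mp hpW
      obtain ⟨hjx, hmem'⟩ := Set.mem_iUnion.mp hx
      rw [Set.mem_preimage, p.2 (β x.1) ⟨μ, hμlt⟩ (hβμ x)] at hmem'
      exact hpU (hjx ▸ hVsub x.1 hmem')
    · rw [p.2 ⟨α, hα⟩ ⟨μ, hμlt⟩ hαμ]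
      exact hpz
end

section
/- Let f : X → Y and g : Y → Z be continuous surjections between compact Hausdorff spaces. If the composition g ∘ f is fully closed, then g is fully closed. -/
open Set Topology

/-- Let `f : X → Y` and `g : Y → Z` be continuous surjections between compact Hausdorff
spaces. If `g ∘ f` is fully closed, then `g` is fully closed. -/
theorem stmt13 {X Y Z : Type} [TopologicalSpace X] [CompactSpace X] [T2Space X]
    [TopologicalSpace Y] [CompactSpace Y] [T2Space Y]
    [TopologicalSpace Z] [CompactSpace Z] [T2Space Z]
    (f : X → Y) (g : Y → Z) (hfc : Continuous f) (hfs : Function.Surjective f)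
    (hgc : Continuous g) (hgs : Function.Surjective g)
    (h : FullyClosed (g ∘ f)) : FullyClosed g := by
  refine ⟨hgc, hgs, fun z s U hUo hcov => ?_⟩
  have key : ∀ i, smallImage (g ∘ f) (f ⁻¹' U i) = smallImage g (U i) := by
    intro i
    unfold smallImage
    rw [← Set.preimage_compl, Set.image_comp, Set.image_preimage_eq _ hfs]
  have hmem := h.2.2 z s (fun i => f ⁻¹' U i) (fun i => (hUo i).preimage hfc) ?_
  · simp only [key] at hmem
    exact hmem
  · intro x hx
    obtain ⟨i, hi⟩ := Set.mem_iUnion.mp (hcov hx)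
    exact Set.mem_iUnion.mpr ⟨i, hi⟩
end
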